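/- Let f(y) = y + y²/2, let c₀ ∈ ℝ, and let u : ℝ → ℝ be bounded and continuous with u(a) = u(b) = c₀ for some a < b. Assume that f(u(x)) ≥ f(c₀) for every x ∈ [a,b], that f(u(x)) ≤ f(c₀) for every x ∉ [a,b], and that ∫_ℝ K(a−y)·(f(u(y)) − f(c₀)) dy ≤ ∫_ℝ K(b−y)·(f(u(y)) − f(c₀)) dy. Then u(x) = c₀ for every x ∈ ℝ. -/

import Mathlib

/-!
Put `g = f(u) - f(c₀)` and `w(y) = K(b - y) - K(a - y)`. Since `K` is negative on `(0, ∞)`,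
positive on `(-∞, 0)` and increasing on each half-line, `w < 0` on `[a, b]` and `w > 0` off it,
so the sign hypotheses give `w g ≤ 0` everywhere while the integral hypothesis says
`∫ w g ≥ 0`. Hence `w g = 0` a.e.; as `w` never vanishes and `g` is continuous, `g ≡ 0`, i.e.
`(u + 1)² ≡ (c₀ + 1)²`. By the intermediate value theorem `u + 1` cannot switch between
`±(c₀ + 1)` without vanishing, so `u(a) = c₀` forces `u ≡ c₀`.
-/

open MeasureTheory Real Set

/-- The kernel `K(x) = -sgn(x) e^{-|x|}/2`, the derivative of the Green's function
`G₂(x) = e^{-|x|}/2` of `1 - d²/dx²` on `ℝ`. -/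
noncomputable def bbmK (x : ℝ) : ℝ := -Real.sign x * Real.exp (-|x|) / 2

lemma bbmK_zero : bbmK 0 = 0 := by simp [bbmK]

lemma bbmK_of_pos {x : ℝ} (hx : 0 < x) : bbmK x = -exp (-x) / 2 := by
  rw [bbmK, Real.sign_of_pos hx, abs_of_pos hx, neg_one_mul]

lemma bbmK_of_neg {x : ℝ} (hx : x < 0) : bbmK x = exp x / 2 := by
  rw [bbmK, Real.sign_of_neg hx, abs_of_neg hx, neg_neg, neg_neg, one_mul]

lemma bbmK_neg_of_pos {x : ℝ} (hx : 0 < x) : bbmK x < 0 := by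
  rw [bbmK_of_pos hx]; linarith [exp_pos (-x)]

lemma bbmK_pos_of_neg {x : ℝ} (hx : x < 0) : 0 < bbmK x := by
  rw [bbmK_of_neg hx]; positivity

lemma strictMonoOn_bbmK_Ioi : StrictMonoOn bbmK (Ioi 0) := by
  intro x hx y hy hxy
  rw [bbmK_of_pos hx, bbmK_of_pos hy]
  linarith [exp_lt_exp.2 (neg_lt_neg hxy)]

lemma strictMonoOn_bbmK_Iio : StrictMonoOn bbmK (Iio 0) := by
  intro x hx y hy hxy
  rw [bbmK_of_neg hx, bbmK_of_neg hy]
  linarith [exp_lt_exp.2 hxy]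

lemma abs_bbmK_le (x : ℝ) : |bbmK x| ≤ exp (-|x|) := by
  rcases lt_trichotomy x 0 with hx | rfl | hx
  · rw [bbmK_of_neg hx, abs_of_pos (by positivity), abs_of_neg hx, neg_neg]
    linarith [exp_pos x]
  · simp [bbmK_zero]
  · rw [bbmK_of_pos hx, abs_of_neg (by linarith [exp_pos (-x)]), abs_of_pos hx]
    linarith [exp_pos (-x)]

lemma measurable_bbmK : Measurable bbmK := by
  have hsign : Measurable Real.sign :=
    Measurable.ite measurableSet_Iio measurable_const
      (Measurable.ite measurableSet_Ioi measurable_const measurable_const)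
  exact (hsign.neg.mul measurable_abs.neg.exp).div_const 2

lemma integrable_exp_neg_abs : Integrable fun x : ℝ => exp (-|x|) := by
  have hIic : IntegrableOn (fun x : ℝ => exp (-|x|)) (Iic 0) :=
    (integrableOn_exp_Iic 0).congr_fun
      (fun x hx => by rw [abs_of_nonpos hx, neg_neg]) measurableSet_Iic
  have hIoi : IntegrableOn (fun x : ℝ => exp (-|x|)) (Ioi 0) :=
    (integrableOn_exp_neg_Ioi 0).congr_fun
      (fun x hx => by rw [abs_of_pos hx]) measurableSet_Ioi
  simpa [Iic_union_Ioi] using hIic.union hIoi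

lemma integrable_bbmK : Integrable bbmK :=
  integrable_exp_neg_abs.mono' measurable_bbmK.aestronglyMeasurable
    (ae_of_all _ abs_bbmK_le)

lemma bbmK_sub_lt_bbmK_sub_of_mem_Icc {a b y : ℝ} (hab : a < b) (hy : y ∈ Icc a b) :
    bbmK (b - y) < bbmK (a - y) := by
  rcases eq_or_lt_of_le hy.2 with rfl | hyb
  · rw [sub_self, bbmK_zero]
    exact bbmK_pos_of_neg (by linarith)
  · calc bbmK (b - y) < 0 := bbmK_neg_of_pos (by linarith)
      _ ≤ bbmK (a - y) := by
        rcases eq_or_lt_of_le hy.1 with rfl | hay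
        · rw [sub_self, bbmK_zero]
        · exact (bbmK_pos_of_neg (by linarith)).le

lemma bbmK_sub_lt_bbmK_sub_of_notMem_Icc {a b y : ℝ} (hab : a < b) (hy : y ∉ Icc a b) :
    bbmK (a - y) < bbmK (b - y) := by
  rcases not_and_or.1 hy with hya | hby
  · have hya := not_le.1 hya
    exact strictMonoOn_bbmK_Ioi (sub_pos.2 hya) (sub_pos.2 (hya.trans hab)) (by linarith)
  · have hby := not_le.1 hby
    exact strictMonoOn_bbmK_Iio (sub_neg.2 (hab.trans hby)) (sub_neg.2 hby) (by linarith)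

lemma sub_bbmK_sub_ne_zero {a b : ℝ} (hab : a < b) (y : ℝ) :
    bbmK (b - y) - bbmK (a - y) ≠ 0 := by
  by_cases hy : y ∈ Icc a b
  · exact (sub_neg.2 (bbmK_sub_lt_bbmK_sub_of_mem_Icc hab hy)).ne
  · exact (sub_pos.2 (bbmK_sub_lt_bbmK_sub_of_notMem_Icc hab hy)).ne'

lemma sub_bbmK_sub_mul_nonpos {a b : ℝ} (hab : a < b) {g : ℝ → ℝ}
    (hin : ∀ y ∈ Icc a b, 0 ≤ g y) (hout : ∀ y ∉ Icc a b, g y ≤ 0) (y : ℝ) :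
    (bbmK (b - y) - bbmK (a - y)) * g y ≤ 0 := by
  by_cases hy : y ∈ Icc a b
  · exact mul_nonpos_of_nonpos_of_nonneg
      (sub_nonpos.2 (bbmK_sub_lt_bbmK_sub_of_mem_Icc hab hy).le) (hin y hy)
  · exact mul_nonpos_of_nonneg_of_nonpos
      (sub_nonneg.2 (bbmK_sub_lt_bbmK_sub_of_notMem_Icc hab hy).le) (hout y hy)

lemma eq_zero_of_mul_nonpos_of_integral_nonneg {X : Type*} [TopologicalSpace X]
    [MeasurableSpace X] {μ : Measure X} [μ.IsOpenPosMeasure] {w g : X → ℝ}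
    (hg : Continuous g) (hw : ∀ x, w x ≠ 0) (hwg : ∀ x, w x * g x ≤ 0)
    (hint : Integrable (fun x => w x * g x) μ) (hpos : 0 ≤ ∫ x, w x * g x ∂μ) : g = 0 := by
  have hzero : ∫ x, -(w x * g x) ∂μ = 0 := by
    rw [integral_neg, le_antisymm (integral_nonpos hwg) hpos, neg_zero]
  have hae : (fun x => -(w x * g x)) =ᵐ[μ] 0 :=
    (integral_eq_zero_iff_of_nonneg (fun x => neg_nonneg.2 (hwg x)) hint.neg).1 hzero
  refine (hg.ae_eq_iff_eq μ continuous_const).1 ?_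
  filter_upwards [hae] with x hx
  exact (mul_eq_zero.1 (neg_eq_zero.1 hx)).resolve_left (hw x)

lemma Continuous.eq_of_forall_sq_eq {X : Type*} [TopologicalSpace X] [PreconnectedSpace X]
    {v : X → ℝ} (hv : Continuous v) {a : X} (h : ∀ x, v x ^ 2 = v a ^ 2) (x : X) :
    v x = v a := by
  rcases sq_eq_sq_iff_eq_or_eq_neg.1 (h x) with hx | hx
  · exact hx
  obtain ⟨z, hz⟩ : (0 : ℝ) ∈ range v := by
    rcases le_total (v a) 0 with ha | ha
    · exact intermediate_value_univ a x hv ⟨ha, by linarith⟩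
    · exact intermediate_value_univ x a hv ⟨by linarith, ha⟩
  have ha : v a = 0 := by simpa [hz] using (h z).symm
  rw [hx, ha, neg_zero]

theorem bbm_unique_continuation_general_second_general (c₀ : ℝ) (u : ℝ → ℝ)
    (hbdd : ∃ C : ℝ, ∀ x, |u x| ≤ C) (hcont : Continuous u)
    (a b : ℝ) (hab : a < b) (hua : u a = c₀)
    (hin : ∀ x ∈ Set.Icc a b, c₀ + c₀ ^ 2 / 2 ≤ u x + u x ^ 2 / 2)
    (hout : ∀ x ∉ Set.Icc a b, u x + u x ^ 2 / 2 ≤ c₀ + c₀ ^ 2 / 2)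
    (hineq : (∫ y : ℝ, bbmK (a - y) * ((u y + u y ^ 2 / 2) - (c₀ + c₀ ^ 2 / 2))) ≤
      ∫ y : ℝ, bbmK (b - y) * ((u y + u y ^ 2 / 2) - (c₀ + c₀ ^ 2 / 2))) :
    ∀ x : ℝ, u x = c₀ := by
  obtain ⟨C, hC⟩ := hbdd
  set g : ℝ → ℝ := fun y => (u y + u y ^ 2 / 2) - (c₀ + c₀ ^ 2 / 2)
  have hg_cont : Continuous g := by fun_prop
  obtain ⟨M, hM⟩ := (isCompact_Icc (a := -C) (b := C)).exists_bound_of_continuousOn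
    (f := fun t => (t + t ^ 2 / 2) - (c₀ + c₀ ^ 2 / 2)) (by fun_prop)
  have hint (c : ℝ) : Integrable fun y => bbmK (c - y) * g y :=
    (integrable_bbmK.comp_sub_left c).mul_bdd hg_cont.aestronglyMeasurable
      (ae_of_all _ fun y => hM (u y) (abs_le.1 (hC y)))
  have hwg := sub_bbmK_sub_mul_nonpos hab (g := g) (fun y hy => sub_nonneg.2 (hin y hy))
    (fun y hy => sub_nonpos.2 (hout y hy))
  have hg_zero : g = 0 := by
    refine eq_zero_of_mul_nonpos_of_integral_nonneg (μ := volume) hg_cont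
      (sub_bbmK_sub_ne_zero hab) hwg ?_ ?_
    · simp_rw [sub_mul]
      exact (hint b).sub (hint a)
    · simp only [sub_mul]
      rw [integral_sub (hint b) (hint a)]
      exact sub_nonneg.2 hineq
  have hsq (x : ℝ) : (u x + 1) ^ 2 = (u a + 1) ^ 2 := by
    have hgx : g x = 0 := congrFun hg_zero x
    rw [hua]
    linear_combination 2 * hgx
  intro x
  simpa [hua] using (hcont.add continuous_const).eq_of_forall_sq_eq hsq x

/-- General unique continuation at a time slice, second sign configuration, with
`f(y) = y + y²/2`: if `u(a) = u(b) = c₀`, `f(u) ≥ f(c₀)` on `[a,b]`, `f(u) ≤ f(c₀)` outside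
`[a,b]`, and `∫ K(a-y)(f(u)-f(c₀)) dy ≤ ∫ K(b-y)(f(u)-f(c₀)) dy`, then `u ≡ c₀`. -/
theorem bbm_unique_continuation_general_second (c₀ : ℝ) (u : ℝ → ℝ)
    (hbdd : ∃ C : ℝ, ∀ x, |u x| ≤ C) (hcont : Continuous u)
    (a b : ℝ) (hab : a < b) (hua : u a = c₀) (hub : u b = c₀)
    (hin : ∀ x ∈ Set.Icc a b, c₀ + c₀ ^ 2 / 2 ≤ u x + u x ^ 2 / 2)
    (hout : ∀ x ∉ Set.Icc a b, u x + u x ^ 2 / 2 ≤ c₀ + c₀ ^ 2 / 2)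
    (hineq : (∫ y : ℝ, bbmK (a - y) * ((u y + u y ^ 2 / 2) - (c₀ + c₀ ^ 2 / 2))) ≤
      ∫ y : ℝ, bbmK (b - y) * ((u y + u y ^ 2 / 2) - (c₀ + c₀ ^ 2 / 2))) :
    ∀ x : ℝ, u x = c₀ :=
  bbm_unique_continuation_general_second_general c₀ u hbdd hcont a b hab hua hin hout hineq
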